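/- arXiv:1903.04970 — 3 statements merged into one kernel-verified Lean document; each statement's English description precedes it below -/
import Mathlib

section
/- Let x, y ∈ ℝ^n have nonnegative entries with x majorized by y, and let z ∈ ℝ^m have nonnegative entries. Then the tensor product vector x⊗z ∈ ℝ^{n·m}, with entries (x⊗z)_{(i,j)} = x_i·z_j, is majorized by y⊗z. -/
open Filter Topology Kronecker Matrix
open scoped ComplexOrder

/-- Sum of the `k` largest entries of a real vector (maximum of all `k`-element subset sums). -/
noncomputable def sumKLargest {ι : Type*} [Fintype ι] (v : ι → ℝ) (k : ℕ) : ℝ :=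
  sSup {x : ℝ | ∃ s : Finset ι, s.card = k ∧ ∑ i ∈ s, v i = x}

/-- `IsMajorizedBy x y` means `x ≺ y`: same total sum, and for every `k = 1,…,n` the
sum of the `k` largest entries of `x` is at most that of `y`. -/
def IsMajorizedBy {ι : Type*} [Fintype ι] (x y : ι → ℝ) : Prop :=
  (∑ i, x i = ∑ i, y i) ∧
  ∀ k : ℕ, 1 ≤ k → k ≤ Fintype.card ι → sumKLargest x k ≤ sumKLargest y k

/-- The decreasing rearrangement of a real vector. -/
noncomputable def sortDesc {n : ℕ} (v : Fin n → ℝ) : Fin n → ℝ :=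
  fun i => v (Tuple.sort v i.rev)

/-- The geometric probability vector `p*(g,d)` with entries `g^i / ∑_j g^j`. -/
noncomputable def pstar (g : ℝ) (d : ℕ) : Fin d → ℝ :=
  fun i => g ^ (i : ℕ) / ∑ j : Fin d, g ^ (j : ℕ)

/-- The Gibbs probability vector at inverse temperature `β` for energies `E`. -/
noncomputable def gibbsVec {m : ℕ} (β : ℝ) (E : Fin m → ℝ) : Fin m → ℝ :=
  fun j => Real.exp (-(β * E j)) / ∑ k : Fin m, Real.exp (-(β * E k))

/-- The Gibbs state: diagonal density matrix with the Gibbs vector on the diagonal. -/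
noncomputable def gibbsState {m : ℕ} (β : ℝ) (E : Fin m → ℝ) : Matrix (Fin m) (Fin m) ℂ :=
  Matrix.diagonal fun j => (gibbsVec β E j : ℂ)

/-- The eigenvalues of a Hermitian matrix (junk value `0` if not Hermitian). -/
noncomputable def eigVec {ι : Type*} [Fintype ι] [DecidableEq ι] (ρ : Matrix ι ι ℂ) : ι → ℝ := by
  classical exact if h : ρ.IsHermitian then h.eigenvalues else 0

/-- The eigenvalue vector of a Hermitian matrix, listed in decreasing order. -/
noncomputable def eigVecDesc {d : ℕ} (ρ : Matrix (Fin d) (Fin d) ℂ) : Fin d → ℝ :=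
  sortDesc (eigVec ρ)

/-- Partial trace over the machine: `(Tr_M X)_{s,s'} = ∑_m X_{(s,m),(s',m)}`. -/
noncomputable def ptraceM {dS dM : ℕ}
    (X : Matrix (Fin dS × Fin dM) (Fin dS × Fin dM) ℂ) : Matrix (Fin dS) (Fin dS) ℂ :=
  Matrix.of fun s s' => ∑ m : Fin dM, X (s, m) (s', m)

/-- The coherent operation `Λ_U(ρ) = Tr_M (U (ρ ⊗ τ_M) U†)` where `τ_M` is the diagonal
machine state with diagonal `τ`. -/
noncomputable def coherentOp {dS dM : ℕ} (τ : Fin dM → ℝ)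
    (U : Matrix (Fin dS × Fin dM) (Fin dS × Fin dM) ℂ)
    (ρ : Matrix (Fin dS) (Fin dS) ℂ) : Matrix (Fin dS) (Fin dS) ℂ :=
  ptraceM (U * (ρ ⊗ₖ Matrix.diagonal fun j => (τ j : ℂ)) * Uᴴ)

/-- `Λ_{U_n} ∘ ⋯ ∘ Λ_{U_1} (ρ)`: the machine is reset to its Gibbs state before each cycle. -/
noncomputable def coherentSeq {dS dM : ℕ} (τ : Fin dM → ℝ) {n : ℕ}
    (U : Fin n → Matrix (Fin dS × Fin dM) (Fin dS × Fin dM) ℂ)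
    (ρ : Matrix (Fin dS) (Fin dS) ℂ) : Matrix (Fin dS) (Fin dS) ℂ :=
  (List.ofFn U).foldl (fun σ V => coherentOp τ V σ) ρ

/-- The optimal coherent operation `A`: the diagonal matrix whose `i`-th diagonal entry is
`∑_{j<d_M} λ_{i·d_M+j}` where `λ` is the decreasing list of eigenvalues of `ρ ⊗ τ_M`. -/
noncomputable def Aopt {dS dM : ℕ} (τ : Fin dM → ℝ)
    (ρ : Matrix (Fin dS) (Fin dS) ℂ) : Matrix (Fin dS) (Fin dS) ℂ :=
  Matrix.diagonal fun i : Fin dS =>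
    ((∑ j : Fin dM,
      sortDesc
        (fun k : Fin (dS * dM) =>
          eigVec (ρ ⊗ₖ Matrix.diagonal fun l => (τ l : ℂ)) (finProdFinEquiv.symm k))
        ⟨(i : ℕ) * dM + (j : ℕ), by
          calc (i : ℕ) * dM + (j : ℕ) < (i : ℕ) * dM + dM := by
                exact Nat.add_lt_add_left j.isLt _
            _ = ((i : ℕ) + 1) * dM := by ring
            _ ≤ dS * dM := Nat.mul_le_mul_right dM i.isLt⟩ : ℝ) : ℂ)

/-- `Δ_i(p) = a·p_i − b·p_{i−1}` for `i ≥ 1` (and `0` for `i = 0`). -/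
noncomputable def delta (a b : ℝ) {d : ℕ} (p : Fin d → ℝ) (i : Fin d) : ℝ :=
  if (i : ℕ) = 0 then 0
  else a * p i - b * p ⟨(i : ℕ) - 1, Nat.lt_of_le_of_lt (Nat.sub_le _ _) i.isLt⟩

/-- The max-swap map `B`: if some `Δ_i(p) > 0`, pick an index `k̄` maximizing `Δ`,
move `Δ_{k̄}(p)` of population from level `k̄` to level `k̄−1`, and rearrange decreasingly;
otherwise `p` is left unchanged. -/
noncomputable def maxSwap (a b : ℝ) {d : ℕ} (p : Fin d → ℝ) : Fin d → ℝ := by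
  classical
  exact
    if h : ∃ k : Fin d, 0 < delta a b p k ∧ ∀ i, delta a b p i ≤ delta a b p k then
      sortDesc (fun i =>
        if i = h.choose then p h.choose - delta a b p h.choose
        else if (i : ℕ) = (h.choose : ℕ) - 1 then p i + delta a b p h.choose
        else p i)
    else p

open Finset

section SumKLargest

variable {ι : Type*} [Fintype ι]

lemma finite_setOf_sum_card_eq (v : ι → ℝ) (k : ℕ) :
    {x : ℝ | ∃ s : Finset ι, #s = k ∧ ∑ i ∈ s, v i = x}.Finite := by
  classical
  refine (Set.finite_range fun s : Finset ι => ∑ i ∈ s, v i).subset ?_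
  rintro x ⟨s, -, rfl⟩
  exact ⟨s, rfl⟩

lemma nonempty_setOf_sum_card_eq (v : ι → ℝ) {k : ℕ} (hk : k ≤ Fintype.card ι) :
    {x : ℝ | ∃ s : Finset ι, #s = k ∧ ∑ i ∈ s, v i = x}.Nonempty := by
  obtain ⟨s, -, hs⟩ := exists_subset_card_eq (s := (univ : Finset ι)) (by simpa using hk)
  exact ⟨_, s, hs, rfl⟩

lemma sum_le_sumKLargest (v : ι → ℝ) {k : ℕ} {s : Finset ι} (hs : #s = k) :
    ∑ i ∈ s, v i ≤ sumKLargest v k :=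
  le_csSup (finite_setOf_sum_card_eq v k).bddAbove ⟨s, hs, rfl⟩

lemma exists_sum_eq_sumKLargest (v : ι → ℝ) {k : ℕ} (hk : k ≤ Fintype.card ι) :
    ∃ s : Finset ι, #s = k ∧ ∑ i ∈ s, v i = sumKLargest v k :=
  (nonempty_setOf_sum_card_eq v hk).csSup_mem (finite_setOf_sum_card_eq v k)

lemma sumKLargest_le (v : ι → ℝ) {k : ℕ} (hk : k ≤ Fintype.card ι) {c : ℝ}
    (h : ∀ s : Finset ι, #s = k → ∑ i ∈ s, v i ≤ c) : sumKLargest v k ≤ c := by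
  refine csSup_le (nonempty_setOf_sum_card_eq v hk) ?_
  rintro x ⟨s, hs, rfl⟩
  exact h s hs

lemma sumKLargest_zero (v : ι → ℝ) : sumKLargest v 0 = 0 :=
  le_antisymm (sumKLargest_le v (Nat.zero_le _) fun s hs => by simp [card_eq_zero.mp hs])
    (by simpa using sum_le_sumKLargest v (card_empty (α := ι)))

lemma IsMajorizedBy.sumKLargest_le {x y : ι → ℝ} (h : IsMajorizedBy x y) {k : ℕ}
    (hk : k ≤ Fintype.card ι) : sumKLargest x k ≤ sumKLargest y k := by
  rcases Nat.eq_zero_or_pos k with rfl | hk0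
  · rw [sumKLargest_zero, sumKLargest_zero]
  · exact h.2 k hk0 hk

end SumKLargest

lemma Finset.sum_eq_sum_sum_fiber_snd {ι κ M : Type*} [Fintype ι] [Fintype κ]
    [AddCommMonoid M] [DecidableEq ι] [DecidableEq κ] (S : Finset (ι × κ)) (f : ι × κ → M) :
    ∑ q ∈ S, f q = ∑ j, ∑ i with (i, j) ∈ S, f (i, j) := by
  simp only [sum_filter]
  rw [← Fintype.sum_prod_type_right (fun q => if q ∈ S then f q else 0), sum_ite_mem,
    univ_inter]

section Tensor

variable {ι κ : Type*} [Fintype ι] [Fintype κ]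

/-- Each fibre `{i | (i, j) ∈ S}` of a `k`-subset `S` is replaced by a set of the same size
carrying the largest entries of `y`; the nonnegative weights `z j` preserve the fibrewise
comparison. -/
lemma sumKLargest_mul_le_of_sumKLargest_le {x y : ι → ℝ} {z : κ → ℝ} (hz : ∀ j, 0 ≤ z j)
    (hxy : ∀ r ≤ Fintype.card ι, sumKLargest x r ≤ sumKLargest y r) {k : ℕ}
    (hk : k ≤ Fintype.card (ι × κ)) :
    sumKLargest (fun q : ι × κ => x q.1 * z q.2) k ≤
      sumKLargest (fun q : ι × κ => y q.1 * z q.2) k := by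
  classical
  refine sumKLargest_le _ hk fun S hS => ?_
  let s (j : κ) : Finset ι := {i | (i, j) ∈ S}
  choose t ht_card ht_sum using fun j => exists_sum_eq_sumKLargest y (card_le_univ (s j))
  let T : Finset (ι × κ) := {q | q.1 ∈ t q.2}
  have hT_fiber (j : κ) : ({i | (i, j) ∈ T} : Finset ι) = t j := by
    simp only [T, mem_filter, mem_univ, true_and, filter_univ_mem]
  have hT_card : #T = k := by
    rw [← hS, card_eq_sum_ones, card_eq_sum_ones, sum_eq_sum_sum_fiber_snd T,
      sum_eq_sum_sum_fiber_snd S]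
    simp only [hT_fiber, ← card_eq_sum_ones, ht_card, s]
  calc ∑ q ∈ S, x q.1 * z q.2 = ∑ j, z j * ∑ i ∈ s j, x i := by
        simp only [sum_eq_sum_sum_fiber_snd S, mul_sum, mul_comm, s]
    _ ≤ ∑ j, z j * ∑ i ∈ t j, y i := by
        gcongr with j
        · exact hz j
        calc ∑ i ∈ s j, x i ≤ sumKLargest x #(s j) := sum_le_sumKLargest x rfl
          _ ≤ sumKLargest y #(s j) := hxy _ (card_le_univ _)
          _ = ∑ i ∈ t j, y i := (ht_sum j).symm
    _ = ∑ q ∈ T, y q.1 * z q.2 := by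
        simp only [sum_eq_sum_sum_fiber_snd T, hT_fiber, mul_sum, mul_comm]
    _ ≤ _ := sum_le_sumKLargest _ hT_card

lemma IsMajorizedBy.tensor {x y : ι → ℝ} (h : IsMajorizedBy x y) {z : κ → ℝ}
    (hz : ∀ j, 0 ≤ z j) :
    IsMajorizedBy (fun q : ι × κ => x q.1 * z q.2) (fun q : ι × κ => y q.1 * z q.2) := by
  refine ⟨?_, fun k _ hk => sumKLargest_mul_le_of_sumKLargest_le hz
    (fun r hr => h.sumKLargest_le hr) hk⟩
  simp only [Fintype.sum_prod_type, ← mul_sum, ← sum_mul, h.1]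

end Tensor

theorem majorization_tensor_stable_general {n m : ℕ}
    (x y : Fin n → ℝ)
    (hmaj : IsMajorizedBy x y)
    (z : Fin m → ℝ) (hz : ∀ j, 0 ≤ z j) :
    IsMajorizedBy (fun q : Fin n × Fin m => x q.1 * z q.2)
      (fun q : Fin n × Fin m => y q.1 * z q.2) :=
  hmaj.tensor hz

/-- Majorization is stable under tensoring with a nonnegative vector:
if `x ≺ y` (entrywise nonnegative), then `x⊗z ≺ y⊗z` for any nonnegative `z`. -/
theorem majorization_tensor_stable {n m : ℕ}
    (x y : Fin n → ℝ) (hx : ∀ i, 0 ≤ x i) (hy : ∀ i, 0 ≤ y i)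
    (hmaj : IsMajorizedBy x y)
    (z : Fin m → ℝ) (hz : ∀ j, 0 ≤ z j) :
    IsMajorizedBy (fun q : Fin n × Fin m => x q.1 * z q.2)
      (fun q : Fin n × Fin m => y q.1 * z q.2) :=
  majorization_tensor_stable_general x y hmaj z hz
end

section
/- Let β ≥ 0, machine energies 0 = ℰ_0 ≤ ⋯ ≤ ℰ_{m−1} = ℰ_max, τ = τ(β,ℰ), g = e^{−β ℰ_max}, and d ≥ 1 with p* = p*(g,d). Then p*_i·τ_j ≥ p*_{i+1}·τ_{j'} for all i = 0,…,d−2 and all j, j' ∈ {0,…,m−1}; consequently, for every k = 1,…,d, the sum of the k·m largest entries of the vector p*⊗τ (with entries p*_i·τ_j) equals ∑_{i=0}^{k−1} p*_i. -/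
open Filter Topology Kronecker Matrix
open scoped ComplexOrder

/-!
Since `p*_{i+1} = g p*_i` and every Gibbs weight `e^{-β ℰ_j}` lies in `[g, 1]`, each entry
`p*_{i'} τ_{j'}` with `i' > i` is at most `g p*_i τ_{j'} ≤ p*_i τ_j`: the entries of `p* ⊗ τ`
decrease block by block. So the first `k` blocks, which have `k m` entries and total weight
`∑_{i<k} p*_i` because `τ` sums to one, dominate every entry outside them, and an exchange
argument (swap `s \ t` for `t \ s`) shows that such a set carries the largest `k m`-element sum.
-/

open Finset

namespace Finset

variable {ι M : Type*} [AddCommMonoid M] [LinearOrder M] [IsOrderedAddMonoid M]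

theorem sum_le_sum_of_card_eq_of_forall_le {s t : Finset ι} {f : ι → M} (hcard : #s = #t)
    (h : ∀ a ∈ s, ∀ b ∈ t, f a ≤ f b) : ∑ i ∈ s, f i ≤ ∑ i ∈ t, f i := by
  rcases t.eq_empty_or_nonempty with rfl | ht
  · simp_all
  · calc ∑ i ∈ s, f i ≤ #s • t.inf' ht f :=
          sum_le_card_nsmul _ _ _ fun a ha => le_inf' ht f fun b hb => h a ha b hb
      _ = #t • t.inf' ht f := by rw [hcard]
      _ ≤ ∑ i ∈ t, f i := card_nsmul_le_sum _ _ _ fun b hb => inf'_le f hb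

theorem sum_le_sum_of_card_eq_of_forall_notMem_le [DecidableEq ι] {s t : Finset ι} {f : ι → M}
    (hcard : #s = #t) (ht : ∀ a ∈ t, ∀ b ∉ t, f b ≤ f a) : ∑ i ∈ s, f i ≤ ∑ i ∈ t, f i := by
  have hdiff : ∑ i ∈ s \ t, f i ≤ ∑ i ∈ t \ s, f i :=
    sum_le_sum_of_card_eq_of_forall_le (card_sdiff_comm hcard) fun b hb a ha =>
      ht a (mem_sdiff.1 ha).1 b (mem_sdiff.1 hb).2
  calc ∑ i ∈ s, f i = ∑ i ∈ s ∩ t, f i + ∑ i ∈ s \ t, f i := (sum_inter_add_sum_sdiff s t f).symm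
    _ ≤ ∑ i ∈ t ∩ s, f i + ∑ i ∈ t \ s, f i := by rw [inter_comm]; gcongr
    _ = ∑ i ∈ t, f i := sum_inter_add_sum_sdiff t s f

end Finset

theorem sumKLargest_card_eq_sum {ι : Type*} [Fintype ι] {v : ι → ℝ} {t : Finset ι}
    (ht : ∀ a ∈ t, ∀ b ∉ t, v b ≤ v a) : sumKLargest v #t = ∑ i ∈ t, v i := by
  classical
  exact IsGreatest.csSup_eq ⟨⟨t, rfl, rfl⟩, by
    rintro x ⟨s, hs, rfl⟩
    exact sum_le_sum_of_card_eq_of_forall_notMem_le hs ht⟩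

theorem sumKLargest_tensor_mul_card_eq {d m : ℕ} {p : Fin d → ℝ} {τ : Fin m → ℝ}
    (hτ : ∑ j, τ j = 1) (hblock : ∀ i i' : Fin d, i < i' → ∀ j j', p i' * τ j' ≤ p i * τ j)
    {k : ℕ} (hk : k ≤ d) :
    sumKLargest (fun q : Fin d × Fin m => p q.1 * τ q.2) (k * m) =
      ∑ i : Fin d, if (i : ℕ) < k then p i else 0 := by
  set T := ({i : Fin d | (i : ℕ) < k} : Finset (Fin d)) ×ˢ (univ : Finset (Fin m)) with hT_def
  have hT : #T = k * m := by
    rw [hT_def, card_product, Fin.card_filter_val_lt, min_eq_right hk, card_univ, Fintype.card_fin]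
  have hdom : ∀ a ∈ T, ∀ b ∉ T, p b.1 * τ b.2 ≤ p a.1 * τ a.2 := fun a ha b hb =>
    hblock a.1 b.1 (by simp_all [T]; omega) a.2 b.2
  rw [← hT, sumKLargest_card_eq_sum hdom, hT_def, sum_product, sum_filter]
  simp only [← mul_sum, hτ, mul_one]

theorem pstar_nonneg {g : ℝ} (hg : 0 ≤ g) (d : ℕ) (i : Fin d) : 0 ≤ pstar g d i := by
  unfold pstar; positivity

theorem pstar_le_mul_pstar_of_lt {g : ℝ} (hg₀ : 0 ≤ g) (hg₁ : g ≤ 1) {d : ℕ} {i i' : Fin d}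
    (h : i < i') : pstar g d i' ≤ g * pstar g d i := by
  rw [pstar, pstar, mul_div_assoc', ← pow_succ']
  gcongr ?_ / _
  exact pow_le_pow_of_le_one hg₀ hg₁ h

theorem gibbsVec_nonneg {m : ℕ} (β : ℝ) (E : Fin m → ℝ) (j : Fin m) : 0 ≤ gibbsVec β E j := by
  unfold gibbsVec; positivity

theorem sum_gibbsVec {m : ℕ} (hm : 0 < m) (β : ℝ) (E : Fin m → ℝ) : ∑ j, gibbsVec β E j = 1 := by
  have : Nonempty (Fin m) := ⟨⟨0, hm⟩⟩
  simp only [gibbsVec]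
  rw [← sum_div, div_self (sum_pos (fun _ _ => Real.exp_pos _) univ_nonempty).ne']

theorem exp_mul_gibbsVec_le {m : ℕ} {β : ℝ} (hβ : 0 ≤ β) {E : Fin m → ℝ} {Emax : ℝ}
    (hE₀ : ∀ j, 0 ≤ E j) (hEmax : ∀ j, E j ≤ Emax) (j j' : Fin m) :
    Real.exp (-(β * Emax)) * gibbsVec β E j' ≤ gibbsVec β E j := by
  rw [gibbsVec, gibbsVec, mul_div_assoc']
  gcongr
  calc Real.exp (-(β * Emax)) * Real.exp (-(β * E j')) ≤ Real.exp (-(β * Emax)) * 1 := by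
        gcongr
        exact Real.exp_le_one_iff.2 (neg_nonpos.2 (mul_nonneg hβ (hE₀ j')))
    _ ≤ Real.exp (-(β * E j)) := by
        rw [mul_one]
        gcongr
        exact hEmax j

theorem pstar_mul_gibbsVec_le_of_lt {d m : ℕ} {β : ℝ} (hβ : 0 ≤ β) {E : Fin m → ℝ} {Emax : ℝ}
    (hE₀ : ∀ j, 0 ≤ E j) (hEmax : ∀ j, E j ≤ Emax) {i i' : Fin d} (h : i < i') (j j' : Fin m) :
    pstar (Real.exp (-(β * Emax))) d i' * gibbsVec β E j' ≤
      pstar (Real.exp (-(β * Emax))) d i * gibbsVec β E j := by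
  set g := Real.exp (-(β * Emax))
  have hg₀ : 0 ≤ g := (Real.exp_pos _).le
  have hg₁ : g ≤ 1 :=
    Real.exp_le_one_iff.2 (neg_nonpos.2 (mul_nonneg hβ ((hE₀ j).trans (hEmax j))))
  calc pstar g d i' * gibbsVec β E j' ≤ g * pstar g d i * gibbsVec β E j' := by
        gcongr
        · exact gibbsVec_nonneg β E j'
        · exact pstar_le_mul_pstar_of_lt hg₀ hg₁ h
    _ = pstar g d i * (g * gibbsVec β E j') := by ring
    _ ≤ pstar g d i * gibbsVec β E j := by
        gcongr
        · exact pstar_nonneg hg₀ d i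
        · exact exp_mul_gibbsVec_le hβ hE₀ hEmax j j'

theorem pstar_tensor_gibbs_ordering_general {m d : ℕ} (hm : 0 < m)
    (β : ℝ) (hβ : 0 ≤ β)
    (E : Fin m → ℝ) (hmono : Monotone E) (hE0 : E ⟨0, hm⟩ = 0)
    (g : ℝ) (hg : g = Real.exp (-(β * E ⟨m - 1, Nat.sub_lt hm Nat.one_pos⟩))) :
    (∀ (i : Fin d) (hi : (i : ℕ) + 1 < d) (j j' : Fin m),
      pstar g d ⟨(i : ℕ) + 1, hi⟩ * gibbsVec β E j' ≤ pstar g d i * gibbsVec β E j) ∧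
    (∀ k : ℕ, 1 ≤ k → k ≤ d →
      sumKLargest (fun q : Fin d × Fin m => pstar g d q.1 * gibbsVec β E q.2) (k * m) =
        ∑ i : Fin d, if (i : ℕ) < k then pstar g d i else 0) := by
  have hE₀ : ∀ j, 0 ≤ E j := fun j => hE0 ▸ hmono (Fin.le_def.2 (Nat.zero_le _))
  have hEmax : ∀ j, E j ≤ E ⟨m - 1, Nat.sub_lt hm Nat.one_pos⟩ := fun j =>
    hmono (Fin.le_def.2 (Nat.le_sub_one_of_lt j.isLt))
  have hblock : ∀ i i' : Fin d, i < i' → ∀ j j',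
      pstar g d i' * gibbsVec β E j' ≤ pstar g d i * gibbsVec β E j := fun _ _ h =>
    hg ▸ pstar_mul_gibbsVec_le_of_lt hβ hE₀ hEmax h
  exact ⟨fun i hi => hblock i _ (Fin.lt_def.2 (Nat.lt_succ_self _)),
    fun k _ hk => sumKLargest_tensor_mul_card_eq (sum_gibbsVec hm β E) hblock hk⟩

/-- The ordering of the entries of `p*(g,d) ⊗ τ(β,ℰ)` is simple:
`p*_i·τ_j ≥ p*_{i+1}·τ_{j'}` for all `i, j, j'`, and consequently the sum of the `k·m`
largest entries of `p* ⊗ τ` equals `∑_{i<k} p*_i`. -/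
theorem pstar_tensor_gibbs_ordering {m d : ℕ} (hm : 0 < m) (hd : 0 < d)
    (β : ℝ) (hβ : 0 ≤ β)
    (E : Fin m → ℝ) (hmono : Monotone E) (hE0 : E ⟨0, hm⟩ = 0)
    (g : ℝ) (hg : g = Real.exp (-(β * E ⟨m - 1, Nat.sub_lt hm Nat.one_pos⟩))) :
    (∀ (i : Fin d) (hi : (i : ℕ) + 1 < d) (j j' : Fin m),
      pstar g d ⟨(i : ℕ) + 1, hi⟩ * gibbsVec β E j' ≤ pstar g d i * gibbsVec β E j) ∧
    (∀ k : ℕ, 1 ≤ k → k ≤ d →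
      sumKLargest (fun q : Fin d × Fin m => pstar g d q.1 * gibbsVec β E q.2) (k * m) =
        ∑ i : Fin d, if (i : ℕ) < k then pstar g d i else 0) :=
  pstar_tensor_gibbs_ordering_general hm β hβ E hmono hE0 g hg
end

section
/- Let β_R, β_H ≥ 0 and 0 < E_S ≤ E_M. Set q_0 = 1/(1 + e^{−β_R E_M}) and q_1 = 1 − q_0 (the Gibbs populations of a qubit of gap E_M at inverse temperature β_R), and h_0 = 1/(1 + e^{−β_H (E_M − E_S)}) and h_1 = 1 − h_0 (the Gibbs populations of a qubit of gap E_M − E_S at inverse temperature β_H). For any p_0 ∈ [0,1], define recursively p_{k+1} = p_k·(1 − q_1·h_0) + (1 − p_k)·q_0·h_1. Then p_k converges as k → ∞ to p_∞ = 1/(1 + e^{−(β_R E_M − β_H (E_M − E_S))}); that is, the steady state of the smallest incoherent (two-qubit machine) refrigerator is the Gibbs state of the target gap E_S at inverse temperature β*_inc determined by β*_inc·E_S = β_R·E_M − β_H·(E_M − E_S). -/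
open Filter Topology Kronecker Matrix
open scoped ComplexOrder

/-! The update `p ↦ p (1 - u) + (1 - p) v`, with decay rate `u = q₁h₀` and excitation rate
`v = q₀h₁`, is affine with fixed point `v / (u + v)` and contracts distances by `1 - (u + v)`,
which lies in `(-1, 1)`. Detailed balance identifies the fixed point: `u / v = (q₁/q₀)(h₀/h₁)` is
the product of the Boltzmann factors `e^{-β_R E_M}` and `e^{β_H (E_M - E_S)}`. -/

theorem tendsto_of_sub_eq_smul_sub {E : Type*} [NormedAddCommGroup E] [NormedSpace ℝ E]
    {x : ℕ → E} {L : E} {r : ℝ} (hr : |r| < 1) (hx : ∀ k, x (k + 1) - L = r • (x k - L)) :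
    Tendsto x atTop (𝓝 L) := by
  have hgeom : ∀ k, x k = L + r ^ k • (x 0 - L) := by
    intro k
    induction k with
    | zero => simp
    | succ k ih => rw [← sub_eq_iff_eq_add', hx, ih, pow_succ', mul_smul, add_sub_cancel_left]
  have hpow := (tendsto_pow_atTop_nhds_zero_of_abs_lt_one hr).smul_const (x 0 - L)
  simpa [← hgeom] using hpow.const_add L

theorem tendsto_two_level_relaxation {p : ℕ → ℝ} {u v : ℝ} (hpos : 0 < u + v) (hlt : u + v < 2)
    (hp : ∀ k, p (k + 1) = p k * (1 - u) + (1 - p k) * v) :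
    Tendsto p atTop (𝓝 (v / (u + v))) := by
  refine tendsto_of_sub_eq_smul_sub (r := 1 - (u + v)) (abs_lt.2 ⟨by linarith, by linarith⟩) ?_
  intro k
  rw [hp, smul_eq_mul]
  field_simp
  ring

theorem one_div_one_add_exp_neg_mem_Ioo (x : ℝ) : 1 / (1 + Real.exp (-x)) ∈ Set.Ioo 0 1 :=
  ⟨by positivity, (div_lt_one (by positivity)).2 (lt_add_of_pos_right 1 (Real.exp_pos _))⟩

theorem one_sub_div_one_div_one_add_exp_neg (x : ℝ) :
    (1 - 1 / (1 + Real.exp (-x))) / (1 / (1 + Real.exp (-x))) = Real.exp (-x) := by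
  field_simp
  ring

theorem two_qubit_machine_steady_state_general (βR βH ES EM : ℝ)
    (q0 q1 h0 h1 : ℝ)
    (hq0 : q0 = 1 / (1 + Real.exp (-(βR * EM)))) (hq1 : q1 = 1 - q0)
    (hh0 : h0 = 1 / (1 + Real.exp (-(βH * (EM - ES))))) (hh1 : h1 = 1 - h0)
    (p : ℕ → ℝ)
    (hrec : ∀ k, p (k + 1) = p k * (1 - q1 * h0) + (1 - p k) * (q0 * h1)) :
    Filter.Tendsto p Filter.atTop
      (nhds (1 / (1 + Real.exp (-(βR * EM - βH * (EM - ES)))))) := by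
  subst hq1 hh1
  obtain ⟨hq0_pos, hq0_lt⟩ := hq0 ▸ one_div_one_add_exp_neg_mem_Ioo (βR * EM)
  obtain ⟨hh0_pos, hh0_lt⟩ := hh0 ▸ one_div_one_add_exp_neg_mem_Ioo (βH * (EM - ES))
  have hratio : (1 - q0) * h0 / (q0 * (1 - h0)) = Real.exp (-(βR * EM - βH * (EM - ES))) := by
    rw [mul_div_mul_comm, ← inv_div (1 - h0), hq0, hh0, one_sub_div_one_div_one_add_exp_neg,
      one_sub_div_one_div_one_add_exp_neg, ← Real.exp_neg, ← Real.exp_add]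
    ring_nf
  have hbalance : 1 / (1 + Real.exp (-(βR * EM - βH * (EM - ES)))) =
      q0 * (1 - h0) / ((1 - q0) * h0 + q0 * (1 - h0)) := by
    have hh1_ne : 1 - h0 ≠ 0 := sub_ne_zero.2 hh0_lt.ne'
    rw [← hratio]
    field_simp
    ring
  rw [hbalance]
  exact tendsto_two_level_relaxation (by nlinarith) (by nlinarith) hrec

/-- Steady state of the smallest incoherent (two-qubit machine) refrigerator:
iterating `p ↦ p(1 − q_1 h_0) + (1 − p) q_0 h_1` drives the target ground-state population to
`1/(1 + e^{−(β_R E_M − β_H (E_M − E_S))})`, i.e. the Gibbs population of gap `E_S` at the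
inverse temperature `β*_inc` with `β*_inc E_S = β_R E_M − β_H (E_M − E_S)`. -/
theorem two_qubit_machine_steady_state (βR βH ES EM : ℝ)
    (hβR : 0 ≤ βR) (hβH : 0 ≤ βH) (hES : 0 < ES) (hESM : ES ≤ EM)
    (q0 q1 h0 h1 : ℝ)
    (hq0 : q0 = 1 / (1 + Real.exp (-(βR * EM)))) (hq1 : q1 = 1 - q0)
    (hh0 : h0 = 1 / (1 + Real.exp (-(βH * (EM - ES))))) (hh1 : h1 = 1 - h0)
    (p : ℕ → ℝ) (hp0 : 0 ≤ p 0) (hp1 : p 0 ≤ 1)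
    (hrec : ∀ k, p (k + 1) = p k * (1 - q1 * h0) + (1 - p k) * (q0 * h1)) :
    Filter.Tendsto p Filter.atTop
      (nhds (1 / (1 + Real.exp (-(βR * EM - βH * (EM - ES)))))) :=
  two_qubit_machine_steady_state_general βR βH ES EM q0 q1 h0 h1 hq0 hq1 hh0 hh1 p hrec
end
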